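/- arXiv:1803.02800 — 3 statements merged into one kernel-verified Lean document; each statement's English description precedes it below -/
import Mathlib

section
/- Let L ≥ 1. Then (-log(1/L) - (L-1)log(1-1/L)) < (-2log(1/L) - 2(L-1)log(1-1/L)) for L ≥ 2; consequently, the maximal log-likelihood over branch lengths of the pattern 'one site with split ac|bd plus L-1 constant sites' on the topology ac|bd, which equals L log(1/2) + log(1/L) + (L-1)log(1-1/L), strictly exceeds the upper bound L log(1/2) + 2log(1/L) + 2(L-1)log(1-1/L) valid for the topology ab|cd, with gap exactly K₁₂ = -log(1/L) - (L-1)log(1-1/L) > 0. -/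
/-!
The gap `-log(1/L) - (L-1) log(1-1/L)` is `L · h(1/L)`, where `h` is the binary entropy,
so it is positive because `h` is positive on `(0, 1)`.
-/

open Real

lemma neg_log_inv_sub_mul_log_one_sub_inv_eq_mul_binEntropy {x : ℝ} (hx : x ≠ 0) :
    -log (1 / x) - (x - 1) * log (1 - 1 / x) = x * binEntropy (1 / x) := by
  rw [binEntropy, log_inv, log_inv]
  field_simp
  ring

lemma neg_log_inv_sub_mul_log_one_sub_inv_pos {x : ℝ} (hx : 1 < x) :
    0 < -log (1 / x) - (x - 1) * log (1 - 1 / x) := by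
  have hx₀ : 0 < x := by linarith
  rw [neg_log_inv_sub_mul_log_one_sub_inv_eq_mul_binEntropy hx₀.ne']
  exact mul_pos hx₀ (binEntropy_pos (by positivity) ((div_lt_one hx₀).2 hx))

/-- For integers `L ≥ 2`: the value `L log(1/2) + log(1/L) + (L-1) log(1-1/L)` (the
maximal log-likelihood on topology `ac|bd` of the pattern "one `ac|bd`-split site plus
`L-1` constant sites") strictly exceeds the upper bound
`L log(1/2) + 2 log(1/L) + 2(L-1) log(1-1/L)` (valid for topology `ab|cd`), with gap
exactly `K₁₂ = -log(1/L) - (L-1) log(1-1/L) > 0`. -/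
theorem stmt_8 (L : ℕ) (hL : 2 ≤ L) :
    (L : ℝ) * Real.log (1 / 2) + 2 * Real.log (1 / (L : ℝ))
        + 2 * ((L : ℝ) - 1) * Real.log (1 - 1 / (L : ℝ))
      < (L : ℝ) * Real.log (1 / 2) + Real.log (1 / (L : ℝ))
        + ((L : ℝ) - 1) * Real.log (1 - 1 / (L : ℝ)) ∧
    ((L : ℝ) * Real.log (1 / 2) + Real.log (1 / (L : ℝ))
        + ((L : ℝ) - 1) * Real.log (1 - 1 / (L : ℝ)))
      - ((L : ℝ) * Real.log (1 / 2) + 2 * Real.log (1 / (L : ℝ))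
        + 2 * ((L : ℝ) - 1) * Real.log (1 - 1 / (L : ℝ)))
      = -Real.log (1 / (L : ℝ)) - ((L : ℝ) - 1) * Real.log (1 - 1 / (L : ℝ)) ∧
    0 < -Real.log (1 / (L : ℝ)) - ((L : ℝ) - 1) * Real.log (1 - 1 / (L : ℝ)) := by
  have hgap_pos := neg_log_inv_sub_mul_log_one_sub_inv_pos (x := L) (by exact_mod_cast hL)
  exact ⟨by linarith, by ring, hgap_pos⟩
end

section
/- For a 4-leaf CFN tree with topology ab|cd and flip probabilities p_a = p_c = ρ, p_b = p_d = p_m = ρ³, any site pattern other than (i) constant, (ii) singleton on a, (iii) singleton on c, or (iv) the split {a,c}|{b,d}, has probability O(ρ³) as ρ → 0. -/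
/-!
Summing over the states `u, v` of the two internal nodes, the term for `(u, v)` is a product of
five flip factors in `[0, 1]`. If `b` and `d` disagree, no term can have the middle edge and the
pendant edges to `b` and `d` all unflipped, so every term carries a factor `ρ³` and the sum is at
most `2ρ³`. The four excluded patterns are exactly those in which `b` and `d` agree.
-/

open Filter Asymptotics

noncomputable def cfnFlip (p : ℝ) (b : Bool) : ℝ := if b then p else 1 - p

/-- CFN probability of leaf pattern `s` on the quartet topology `ab|cd` (leaf slots
`a,b,c,d = 0,1,2,3`, grouped `{0,1} | {2,3}`), with pendant flip probabilities
`p 0, ..., p 3`, middle-edge flip probability `p 4`, and a uniform root. -/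
noncomputable def cfnSiteProb (p : Fin 5 → ℝ) (s : Fin 4 → Bool) : ℝ :=
  (1 / 2) * ∑ u : Bool, ∑ v : Bool,
    cfnFlip (p 4) (u != v) * cfnFlip (p 0) (u != s 0) * cfnFlip (p 1) (u != s 1) *
      cfnFlip (p 2) (v != s 2) * cfnFlip (p 3) (v != s 3)

/-- The Felsenstein-zone flip probabilities: `p_a = p_c = ρ`, `p_b = p_d = p_m = ρ³`. -/
noncomputable def felsP (ρ : ℝ) : Fin 5 → ℝ := ![ρ, ρ ^ 3, ρ, ρ ^ 3, ρ ^ 3]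

/-- `s` assigns the same state to all four leaves. -/
def isConstantPat (s : Fin 4 → Bool) : Prop := ∀ i, s i = s 0

/-- `s` is a singleton pattern on leaf `i`: all other leaves agree and `i` differs. -/
def isSingletonOn (i : Fin 4) (s : Fin 4 → Bool) : Prop :=
  (∀ j k : Fin 4, j ≠ i → k ≠ i → s j = s k) ∧ (∃ j, j ≠ i ∧ s i ≠ s j)

/-- `s` is the split pattern `{a,c} | {b,d}` (leaves `0,2` vs `1,3`). -/
def isACSplit (s : Fin 4 → Bool) : Prop := s 0 = s 2 ∧ s 1 = s 3 ∧ s 0 ≠ s 1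

theorem cfnFlip_mem_unitInterval {p : ℝ} (hp : p ∈ unitInterval) (b : Bool) :
    cfnFlip p b ∈ unitInterval := by
  cases b
  · exact ⟨sub_nonneg.2 hp.2, sub_le_self 1 hp.1⟩
  · exact hp

theorem cfnSiteProb_nonneg {p : Fin 5 → ℝ} (hp : ∀ i, p i ∈ unitInterval) (s : Fin 4 → Bool) :
    0 ≤ cfnSiteProb p s := by
  have hf (i : Fin 5) (b : Bool) : 0 ≤ cfnFlip (p i) b := (cfnFlip_mem_unitInterval (hp i) b).1
  unfold cfnSiteProb
  exact mul_nonneg (by norm_num) <|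
    Finset.sum_nonneg fun u _ => Finset.sum_nonneg fun v _ => by apply_rules [mul_nonneg]

theorem cfnSiteProb_le_two_mul_of_ne {p : Fin 5 → ℝ} {q : ℝ} (hp : ∀ i, p i ∈ unitInterval)
    (hq1 : p 1 ≤ q) (hq3 : p 3 ≤ q) (hq4 : p 4 ≤ q) {s : Fin 4 → Bool} (hs : s 1 ≠ s 3) :
    cfnSiteProb p s ≤ 2 * q := by
  have h0 (i : Fin 5) (b : Bool) : 0 ≤ cfnFlip (p i) b := (cfnFlip_mem_unitInterval (hp i) b).1
  have h1 (i : Fin 5) (b : Bool) : cfnFlip (p i) b ≤ 1 := (cfnFlip_mem_unitInterval (hp i) b).2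
  have hterm (u v : Bool) :
      cfnFlip (p 4) (u != v) * cfnFlip (p 0) (u != s 0) * cfnFlip (p 1) (u != s 1) *
        cfnFlip (p 2) (v != s 2) * cfnFlip (p 3) (v != s 3) ≤ q := by
    have hflip : (u != v) = true ∨ (u != s 1) = true ∨ (v != s 3) = true := by
      revert hs; cases u <;> cases v <;> cases s 1 <;> cases s 3 <;> decide
    rcases hflip with h | h | h <;> rw [h]
    · calc _ ≤ cfnFlip (p 4) true * 1 * 1 * 1 * 1 := by
            gcongr <;> apply_rules [mul_nonneg, zero_le_one]
        _ ≤ q := by simpa [cfnFlip] using hq4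
    · calc _ ≤ 1 * 1 * cfnFlip (p 1) true * 1 * 1 := by
            gcongr <;> apply_rules [mul_nonneg, zero_le_one]
        _ ≤ q := by simpa [cfnFlip] using hq1
    · calc _ ≤ 1 * 1 * 1 * 1 * cfnFlip (p 3) true := by
            gcongr <;> apply_rules [mul_nonneg, zero_le_one]
        _ ≤ q := by simpa [cfnFlip] using hq3
  unfold cfnSiteProb
  calc _ ≤ (1 / 2 : ℝ) * ∑ _u : Bool, ∑ _v : Bool, q := by
        gcongr with u _ v _; exact hterm u v
    _ = 2 * q := by simp

theorem isConstantPat_or_isSingletonOn_or_isACSplit_of_eq {s : Fin 4 → Bool} (hs : s 1 = s 3) :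
    isConstantPat s ∨ isSingletonOn 0 s ∨ isSingletonOn 2 s ∨ isACSplit s := by
  unfold isConstantPat isSingletonOn isACSplit
  revert s
  decide

theorem felsP_mem_unitInterval {ρ : ℝ} (hρ : ρ ∈ unitInterval) (i : Fin 5) :
    felsP ρ i ∈ unitInterval := by
  have hρ3 : ρ ^ 3 ∈ unitInterval := ⟨pow_nonneg hρ.1 3, pow_le_one₀ hρ.1 hρ.2⟩
  fin_cases i <;> assumption

/-- On the Felsenstein-zone quartet `ab|cd` with `p_a = p_c = ρ`, `p_b = p_d = p_m = ρ³`,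
any site pattern other than (i) constant, (ii) a singleton on `a`, (iii) a singleton on
`c`, or (iv) the split `{a,c} | {b,d}`, has probability `O(ρ³)` as `ρ → 0⁺`. -/
theorem stmt_11 (s : Fin 4 → Bool)
    (h : ¬ isConstantPat s ∧ ¬ isSingletonOn 0 s ∧ ¬ isSingletonOn 2 s ∧ ¬ isACSplit s) :
    (fun ρ : ℝ => cfnSiteProb (felsP ρ) s)
      =O[nhdsWithin 0 (Set.Ioi 0)] (fun ρ : ℝ => ρ ^ 3) := by
  obtain ⟨hconst, hsinga, hsingc, hsplit⟩ := h
  have hbd : s 1 ≠ s 3 := fun hbd => by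
    rcases isConstantPat_or_isSingletonOn_or_isACSplit_of_eq hbd with h | h | h | h
    exacts [hconst h, hsinga h, hsingc h, hsplit h]
  refine IsBigO.of_bound 2 ?_
  filter_upwards [Ioo_mem_nhdsGT one_pos] with ρ ⟨hρ0, hρ1⟩
  have hp := felsP_mem_unitInterval ⟨hρ0.le, hρ1.le⟩
  rw [Real.norm_of_nonneg (cfnSiteProb_nonneg hp s), Real.norm_of_nonneg (by positivity)]
  exact cfnSiteProb_le_two_mul_of_ne hp le_rfl le_rfl le_rfl hbd
end

section
/- For L ≥ 1 and bootstrap threshold B ≥ 1 - (2/3)(1/L)^L: if a length-L four-taxon dataset x contains at least one uninformative character (constant or singleton site), then when resampling L sites uniformly with replacement from the L sites of x, the probability of obtaining a dataset consisting only of copies of that uninformative character is at least (1/L)^L; consequently the bootstrap support of any fixed topology is at most 1 - (2/3)(1/L)^L ≤ B. -/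
open Filter Asymptotics

attribute [local instance] Classical.propDecidable

/-- The three quartet topologies `ab|cd`, `ac|bd`, `ad|bc`, encoded as permutations
placing taxa into the leaf slots of the fixed shape `{0,1} | {2,3}`. -/
def quartetPerm : Fin 3 → Equiv.Perm (Fin 4) := ![1, Equiv.swap 1 2, Equiv.swap 1 3]

/-- Maximum likelihood (supremum over flip probabilities in `[0,1/2]`, i.e. over all
nonnegative, possibly infinite, branch lengths) of a length-`L` quartet dataset `x` on
topology `t`. -/
noncomputable def maxLik {L : ℕ} (t : Fin 3) (x : Fin L → Fin 4 → Bool) : ℝ :=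
  sSup { y : ℝ | ∃ p : Fin 5 → ℝ, (∀ e, p e ∈ Set.Icc (0 : ℝ) (1 / 2)) ∧
    y = ∏ i, cfnSiteProb p (fun v => x i (quartetPerm t v)) }

/-- `t` is an ML-optimal topology for the dataset `x`. -/
noncomputable def isOptimal {L : ℕ} (t : Fin 3) (x : Fin L → Fin 4 → Bool) : Prop :=
  ∀ t' : Fin 3, maxLik t' x ≤ maxLik t x

/-- Bootstrap support of topology `t` for the dataset `x`: the expectation, over a
uniform resampling `r` of `L` sites with replacement, of the probability that a uniformly
random ML-optimal topology of the resampled dataset equals `t`. -/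
noncomputable def bootSupport {L : ℕ} (t : Fin 3) (x : Fin L → Fin 4 → Bool) : ℝ :=
  (1 / (L : ℝ) ^ L) * ∑ r : Fin L → Fin L,
    (if isOptimal t (fun i => x (r i)) then
      1 / ((Finset.univ.filter (fun t' : Fin 3 => isOptimal t' (fun i => x (r i)))).card : ℝ)
     else 0)

/-- A single-site pattern is uninformative if it is constant or a singleton. -/
def isUninformative (s : Fin 4 → Bool) : Prop :=
  (∀ i, s i = s 0) ∨
  (∃ i : Fin 4, (∀ j k : Fin 4, j ≠ i → k ≠ i → s j = s k) ∧ ∃ j, j ≠ i ∧ s i ≠ s j)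


noncomputable def Q' (p0 p1 p2 p3 p4 : ℝ) (a b c d : Bool) : ℝ :=
  (1 / 2) * ∑ u : Bool, ∑ v : Bool,
    cfnFlip p4 (u != v) * cfnFlip p0 (u != a) * cfnFlip p1 (u != b) *
      cfnFlip p2 (v != c) * cfnFlip p3 (v != d)

lemma cfn_eq_Q' (p : Fin 5 → ℝ) (s : Fin 4 → Bool) :
    cfnSiteProb p s = Q' (p 0) (p 1) (p 2) (p 3) (p 4) (s 0) (s 1) (s 2) (s 3) := rfl

lemma ID01' (p0 p1 p2 p3 p4 : ℝ) (a b : Bool) :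
    Q' p0 p1 p2 p3 p4 b a a a = Q' p1 p0 p2 p3 p4 a b a a := by
  cases a <;> cases b <;> simp [Q', cfnFlip] <;> ring

lemma ID02' (p0 p1 p2 p3 p4 : ℝ) (a b : Bool) :
    Q' p0 p1 p2 p3 p4 b a a a = Q' p2 p3 p0 p1 p4 a a b a := by
  cases a <;> cases b <;> simp [Q', cfnFlip] <;> ring

lemma ID03' (p0 p1 p2 p3 p4 : ℝ) (a b : Bool) :
    Q' p0 p1 p2 p3 p4 b a a a = Q' p2 p3 p1 p0 p4 a a a b := by
  cases a <;> cases b <;> simp [Q', cfnFlip] <;> ring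

lemma ID12' (p0 p1 p2 p3 p4 : ℝ) (a b : Bool) :
    Q' p0 p1 p2 p3 p4 a b a a = Q' p2 p3 p1 p0 p4 a a b a := by
  cases a <;> cases b <;> simp [Q', cfnFlip] <;> ring

lemma ID13' (p0 p1 p2 p3 p4 : ℝ) (a b : Bool) :
    Q' p0 p1 p2 p3 p4 a b a a = Q' p2 p3 p0 p1 p4 a a a b := by
  cases a <;> cases b <;> simp [Q', cfnFlip] <;> ring

lemma ID23' (p0 p1 p2 p3 p4 : ℝ) (a b : Bool) :
    Q' p0 p1 p2 p3 p4 a a b a = Q' p0 p1 p3 p2 p4 a a a b := by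
  cases a <;> cases b <;> simp [Q', cfnFlip] <;> ring

lemma move' (p : Fin 5 → ℝ) (hp : ∀ e, p e ∈ Set.Icc (0:ℝ) (1/2)) (a b : Bool) (m m' : Fin 4) :
    ∃ p' : Fin 5 → ℝ, (∀ e, p' e ∈ Set.Icc (0:ℝ) (1/2)) ∧
      cfnSiteProb p' (fun v => if v = m' then b else a)
        = cfnSiteProb p (fun v => if v = m then b else a) := by
  fin_cases m <;> fin_cases m'
  · exact ⟨p, hp, rfl⟩
  · refine ⟨![p 1, p 0, p 2, p 3, p 4], fun e => by fin_cases e <;> simpa using hp _, ?_⟩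
    rw [cfn_eq_Q', cfn_eq_Q']
    simp only [Matrix.cons_val_zero, Matrix.cons_val_one, Matrix.head_cons, Matrix.cons_val_two,
      Matrix.tail_cons, Matrix.cons_val_three, Matrix.cons_val_four, Fin.isValue]
    norm_num
    exact (ID01' (p 0) (p 1) (p 2) (p 3) (p 4) a b).symm
  · refine ⟨![p 2, p 3, p 0, p 1, p 4], fun e => by fin_cases e <;> simpa using hp _, ?_⟩
    rw [cfn_eq_Q', cfn_eq_Q']
    simp only [Matrix.cons_val_zero, Matrix.cons_val_one, Matrix.head_cons, Matrix.cons_val_two,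
      Matrix.tail_cons, Matrix.cons_val_three, Matrix.cons_val_four, Fin.isValue]
    norm_num
    exact (ID02' (p 0) (p 1) (p 2) (p 3) (p 4) a b).symm
  · refine ⟨![p 2, p 3, p 1, p 0, p 4], fun e => by fin_cases e <;> simpa using hp _, ?_⟩
    rw [cfn_eq_Q', cfn_eq_Q']
    simp only [Matrix.cons_val_zero, Matrix.cons_val_one, Matrix.head_cons, Matrix.cons_val_two,
      Matrix.tail_cons, Matrix.cons_val_three, Matrix.cons_val_four, Fin.isValue]
    norm_num
    exact (ID03' (p 0) (p 1) (p 2) (p 3) (p 4) a b).symm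
  · refine ⟨![p 1, p 0, p 2, p 3, p 4], fun e => by fin_cases e <;> simpa using hp _, ?_⟩
    rw [cfn_eq_Q', cfn_eq_Q']
    simp only [Matrix.cons_val_zero, Matrix.cons_val_one, Matrix.head_cons, Matrix.cons_val_two,
      Matrix.tail_cons, Matrix.cons_val_three, Matrix.cons_val_four, Fin.isValue]
    norm_num
    exact ID01' (p 1) (p 0) (p 2) (p 3) (p 4) a b
  · exact ⟨p, hp, rfl⟩
  · refine ⟨![p 2, p 3, p 1, p 0, p 4], fun e => by fin_cases e <;> simpa using hp _, ?_⟩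
    rw [cfn_eq_Q', cfn_eq_Q']
    simp only [Matrix.cons_val_zero, Matrix.cons_val_one, Matrix.head_cons, Matrix.cons_val_two,
      Matrix.tail_cons, Matrix.cons_val_three, Matrix.cons_val_four, Fin.isValue]
    norm_num
    exact (ID12' (p 0) (p 1) (p 2) (p 3) (p 4) a b).symm
  · refine ⟨![p 2, p 3, p 0, p 1, p 4], fun e => by fin_cases e <;> simpa using hp _, ?_⟩
    rw [cfn_eq_Q', cfn_eq_Q']
    simp only [Matrix.cons_val_zero, Matrix.cons_val_one, Matrix.head_cons, Matrix.cons_val_two,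
      Matrix.tail_cons, Matrix.cons_val_three, Matrix.cons_val_four, Fin.isValue]
    norm_num
    exact (ID13' (p 0) (p 1) (p 2) (p 3) (p 4) a b).symm
  · refine ⟨![p 2, p 3, p 0, p 1, p 4], fun e => by fin_cases e <;> simpa using hp _, ?_⟩
    rw [cfn_eq_Q', cfn_eq_Q']
    simp only [Matrix.cons_val_zero, Matrix.cons_val_one, Matrix.head_cons, Matrix.cons_val_two,
      Matrix.tail_cons, Matrix.cons_val_three, Matrix.cons_val_four, Fin.isValue]
    norm_num
    exact ID02' (p 2) (p 3) (p 0) (p 1) (p 4) a b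
  · refine ⟨![p 3, p 2, p 0, p 1, p 4], fun e => by fin_cases e <;> simpa using hp _, ?_⟩
    rw [cfn_eq_Q', cfn_eq_Q']
    simp only [Matrix.cons_val_zero, Matrix.cons_val_one, Matrix.head_cons, Matrix.cons_val_two,
      Matrix.tail_cons, Matrix.cons_val_three, Matrix.cons_val_four, Fin.isValue]
    norm_num
    exact ID12' (p 3) (p 2) (p 0) (p 1) (p 4) a b
  · exact ⟨p, hp, rfl⟩
  · refine ⟨![p 0, p 1, p 3, p 2, p 4], fun e => by fin_cases e <;> simpa using hp _, ?_⟩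
    rw [cfn_eq_Q', cfn_eq_Q']
    simp only [Matrix.cons_val_zero, Matrix.cons_val_one, Matrix.head_cons, Matrix.cons_val_two,
      Matrix.tail_cons, Matrix.cons_val_three, Matrix.cons_val_four, Fin.isValue]
    norm_num
    exact (ID23' (p 0) (p 1) (p 2) (p 3) (p 4) a b).symm
  · refine ⟨![p 3, p 2, p 0, p 1, p 4], fun e => by fin_cases e <;> simpa using hp _, ?_⟩
    rw [cfn_eq_Q', cfn_eq_Q']
    simp only [Matrix.cons_val_zero, Matrix.cons_val_one, Matrix.head_cons, Matrix.cons_val_two,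
      Matrix.tail_cons, Matrix.cons_val_three, Matrix.cons_val_four, Fin.isValue]
    norm_num
    exact ID03' (p 3) (p 2) (p 0) (p 1) (p 4) a b
  · refine ⟨![p 2, p 3, p 0, p 1, p 4], fun e => by fin_cases e <;> simpa using hp _, ?_⟩
    rw [cfn_eq_Q', cfn_eq_Q']
    simp only [Matrix.cons_val_zero, Matrix.cons_val_one, Matrix.head_cons, Matrix.cons_val_two,
      Matrix.tail_cons, Matrix.cons_val_three, Matrix.cons_val_four, Fin.isValue]
    norm_num
    exact ID13' (p 2) (p 3) (p 0) (p 1) (p 4) a b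
  · refine ⟨![p 0, p 1, p 3, p 2, p 4], fun e => by fin_cases e <;> simpa using hp _, ?_⟩
    rw [cfn_eq_Q', cfn_eq_Q']
    simp only [Matrix.cons_val_zero, Matrix.cons_val_one, Matrix.head_cons, Matrix.cons_val_two,
      Matrix.tail_cons, Matrix.cons_val_three, Matrix.cons_val_four, Fin.isValue]
    norm_num
    exact ID23' (p 0) (p 1) (p 3) (p 2) (p 4) a b
  · exact ⟨p, hp, rfl⟩

lemma core' {s : Fin 4 → Bool} (hs : isUninformative s) (t t' : Fin 3)
    (p : Fin 5 → ℝ) (hp : ∀ e, p e ∈ Set.Icc (0:ℝ) (1/2)) :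
    ∃ p' : Fin 5 → ℝ, (∀ e, p' e ∈ Set.Icc (0:ℝ) (1/2)) ∧
      cfnSiteProb p' (fun v => s (quartetPerm t' v))
        = cfnSiteProb p (fun v => s (quartetPerm t v)) := by
  have hinv : ∀ (τ : Fin 3) (w : Fin 4), quartetPerm τ (quartetPerm τ w) = w := by
    intro τ w; fin_cases τ <;> simp [quartetPerm]
  rcases hs with hc | ⟨i, h1, j, hj, hne⟩
  · refine ⟨p, hp, ?_⟩
    congr 1
    funext v
    rw [hc (quartetPerm t' v), hc (quartetPerm t v)]
  · have hs' : ∀ τ : Fin 3, (fun v => s (quartetPerm τ v))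
        = (fun v => if v = quartetPerm τ i then s i else s j) := by
      intro τ; funext v
      by_cases h : v = quartetPerm τ i
      · rw [if_pos h, h, hinv τ i]
      · rw [if_neg h]
        refine h1 _ _ (fun hcon => h ?_) hj
        rw [← hcon, hinv τ v]
    rw [hs' t, hs' t']
    exact move' p hp (s j) (s i) (quartetPerm t i) (quartetPerm t' i)

lemma maxLik_eq_of_const {L : ℕ} {s : Fin 4 → Bool} (hs : isUninformative s)
    (ds : Fin L → Fin 4 → Bool) (hds : ∀ i, ds i = s) (t t' : Fin 3) :
    maxLik t ds = maxLik t' ds := by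
  unfold maxLik
  congr 1
  have key : ∀ a b : Fin 3,
      { y : ℝ | ∃ p : Fin 5 → ℝ, (∀ e, p e ∈ Set.Icc (0 : ℝ) (1 / 2)) ∧
        y = ∏ i, cfnSiteProb p (fun v => ds i (quartetPerm a v)) } ⊆
      { y : ℝ | ∃ p : Fin 5 → ℝ, (∀ e, p e ∈ Set.Icc (0 : ℝ) (1 / 2)) ∧
        y = ∏ i, cfnSiteProb p (fun v => ds i (quartetPerm b v)) } := by
    rintro a b y ⟨p, hp, rfl⟩
    obtain ⟨p', hp', heq⟩ := core' hs a b p hp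
    refine ⟨p', hp', ?_⟩
    refine Finset.prod_congr rfl (fun i _ => ?_)
    simp only [hds]
    exact heq.symm
  exact Set.Subset.antisymm (key t t') (key t' t)

lemma all_optimal {L : ℕ} {s : Fin 4 → Bool} (hs : isUninformative s)
    (ds : Fin L → Fin 4 → Bool) (hds : ∀ i, ds i = s) (t : Fin 3) : isOptimal t ds :=
  fun t' => le_of_eq (maxLik_eq_of_const hs ds hds t' t)

/-- For `L ≥ 1` and bootstrap threshold `B ≥ 1 - (2/3)(1/L)^L`: if a length-`L` quartet
dataset `x` contains an uninformative character at some site `i₀`, then the probability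
(under uniform resampling of `L` sites with replacement) of obtaining a dataset
consisting only of copies of site `i₀` is at least `(1/L)^L`, and the bootstrap support
of any fixed topology is at most `1 - (2/3)(1/L)^L ≤ B`. -/
theorem stmt_18 (L : ℕ) (hL : 1 ≤ L) (B : ℝ)
    (hB : 1 - (2 / 3) * (1 / (L : ℝ)) ^ L ≤ B)
    (x : Fin L → Fin 4 → Bool) (i₀ : Fin L) (hunif : isUninformative (x i₀)) :
    (1 / (L : ℝ)) ^ L ≤
      ((Finset.univ.filter (fun r : Fin L → Fin L => ∀ j, r j = i₀)).card : ℝ)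
        / (L : ℝ) ^ L ∧
    ∀ t : Fin 3, bootSupport t x ≤ 1 - (2 / 3) * (1 / (L : ℝ)) ^ L ∧ bootSupport t x ≤ B := by
  have hL0 : (0:ℝ) < (L:ℝ) := by exact_mod_cast hL
  have hN : (0:ℝ) < (L:ℝ) ^ L := pow_pos hL0 L
  constructor
  · have hcard : (Finset.univ.filter (fun r : Fin L → Fin L => ∀ j, r j = i₀))
        = {fun _ => i₀} := by
      ext r
      simp only [Finset.mem_filter, Finset.mem_univ, true_and, Finset.mem_singleton]
      exact ⟨fun h => funext h, fun h j => by rw [h]⟩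
    rw [hcard, Finset.card_singleton, one_div_pow]
    simp
  · intro t
    have hmain : bootSupport t x ≤ 1 - (2/3) * (1/(L:ℝ))^L := by
      set r₀ : Fin L → Fin L := fun _ => i₀ with hr₀
      have hopt : ∀ t', isOptimal t' (fun i => x (r₀ i)) :=
        fun t' => all_optimal hunif _ (fun i => rfl) t'
      have hfilter : Finset.univ.filter
          (fun t' : Fin 3 => isOptimal t' (fun i => x (r₀ i))) = Finset.univ :=
        Finset.filter_true_of_mem (fun t' _ => hopt t')
      have hsum : (∑ r : Fin L → Fin L,
          (if isOptimal t (fun i => x (r i)) then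
            1 / ((Finset.univ.filter
              (fun t' : Fin 3 => isOptimal t' (fun i => x (r i)))).card : ℝ)
          else 0)) ≤ (L:ℝ)^L - 2/3 := by
        have step1 : (∑ r : Fin L → Fin L,
            (if isOptimal t (fun i => x (r i)) then
              1 / ((Finset.univ.filter
                (fun t' : Fin 3 => isOptimal t' (fun i => x (r i)))).card : ℝ)
            else 0)) ≤ ∑ r : Fin L → Fin L, (if r = r₀ then (1/3 : ℝ) else 1) := by
          refine Finset.sum_le_sum (fun r _ => ?_)
          by_cases hr : r = r₀
          · subst hr
            rw [if_pos rfl, if_pos (hopt t), hfilter]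
            simp
          · rw [if_neg hr]
            split_ifs with h
            · have hmem : t ∈ Finset.univ.filter
                  (fun t' : Fin 3 => isOptimal t' (fun i => x (r i))) :=
                Finset.mem_filter.mpr ⟨Finset.mem_univ t, h⟩
              have h1 : 1 ≤ (Finset.univ.filter
                  (fun t' : Fin 3 => isOptimal t' (fun i => x (r i)))).card :=
                Finset.card_pos.mpr ⟨t, hmem⟩
              have h1' : (1:ℝ) ≤ ((Finset.univ.filter
                  (fun t' : Fin 3 => isOptimal t' (fun i => x (r i)))).card : ℝ) := by
                exact_mod_cast h1
              rw [div_le_one (by linarith)]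
              exact h1'
            · norm_num
        have step2 : (∑ r : Fin L → Fin L, (if r = r₀ then (1/3 : ℝ) else 1))
            = (L:ℝ)^L - 2/3 := by
          have hcongr : ∀ r : Fin L → Fin L,
              (if r = r₀ then (1/3 : ℝ) else 1) = 1 + (if r = r₀ then (-(2/3) : ℝ) else 0) := by
            intro r; split_ifs <;> norm_num
          rw [Finset.sum_congr rfl (fun r _ => hcongr r), Finset.sum_add_distrib,
            Finset.sum_const, Finset.sum_ite_eq' Finset.univ r₀ (fun _ => (-(2/3) : ℝ))]
          simp only [Finset.mem_univ, if_pos, Finset.card_univ, Fintype.card_fun,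
            Fintype.card_fin, nsmul_eq_mul, mul_one]
          push_cast
          ring
        linarith [step1, step2.le, step2.ge]
      unfold bootSupport
      have hmul : (1 / (L:ℝ)^L) * (∑ r : Fin L → Fin L,
          (if isOptimal t (fun i => x (r i)) then
            1 / ((Finset.univ.filter
              (fun t' : Fin 3 => isOptimal t' (fun i => x (r i)))).card : ℝ)
          else 0)) ≤ (1 / (L:ℝ)^L) * ((L:ℝ)^L - 2/3) :=
        mul_le_mul_of_nonneg_left hsum (by positivity)
      have hfin : (1 / (L:ℝ)^L) * ((L:ℝ)^L - 2/3) = 1 - (2/3) * (1/(L:ℝ))^L := by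
        rw [one_div_pow]
        field_simp
      linarith [hmul, hfin.le, hfin.ge]
    exact ⟨hmain, hmain.trans hB⟩
end
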